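/- Let f ∈ ℚ((z⁻¹)) satisfy f(z) = (A(z) f(z^d) + C(z))/B(z) with A, B, C ∈ ℤ[z], A B ≠ 0, d ≥ 2, and suppose f is not rational. Let [u, v] be a gap in Φ(f) (u, v consecutive degrees of denominators of convergents of f) with v - u > (deg A + deg B)/(d - 1). Then the rational function (A(z) p_u(z^d) + C(z) q_u(z^d)) / (B(z) q_u(z^d)), after cancellation by the gcd of numerator and denominator, is a convergent of f, and the size of the gap associated to this new convergent is strictly greater than v - u. -/

import Mathlib

noncomputable section
open Classical Polynomial

/-- The space ℚ((z⁻¹)) of formal Laurent series over ℚ (variable X = z⁻¹). -/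
abbrev LS := LaurentSeries ℚ

/-- Degree of a formal Laurent series in z (minus the order in X = z⁻¹). -/
def ldeg (f : LS) : ℤ := -f.order


def Dmet (f g : LS) : ℝ := if f = g then 0 else (2 : ℝ) ^ ldeg (f - g)

/-- The element z of ℚ((z⁻¹)): the series X⁻¹ where X = z⁻¹. -/
def Zl : LS := HahnSeries.single (-1 : ℤ) (1 : ℚ)

/-- The polynomial part ⌊f⌋ of a formal Laurent series: the terms with
nonnegative powers of z, i.e. nonpositive exponents of X = z⁻¹. -/
def polyPart (f : LS) : LS :=
  ⟨fun n => if n ≤ 0 then f.coeff n else 0, by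
    refine f.isPWO_support'.mono fun n hn => ?_
    simp only [Function.mem_support] at hn ⊢
    intro h; apply hn; split <;> simp [h]⟩

/-- f is a rational function, i.e. a quotient of two polynomials in ℚ[z]. -/
def IsRatFn (f : LS) : Prop :=
  ∃ P Q : Polynomial ℚ, Q ≠ 0 ∧ f * Polynomial.aeval Zl Q = Polynomial.aeval Zl P

/-- The sequence f₀ = f, f_{n+1} = (fₙ - ⌊fₙ⌋)⁻¹ of the continued fraction
algorithm; the partial quotients are aₙ = ⌊fₙ⌋. -/
def Fseq (f : LS) : ℕ → LS
  | 0 => f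
  | n + 1 => (Fseq f n - polyPart (Fseq f n))⁻¹

/-- Continued fraction numerators: p₀ = a₀, p₁ = a₁a₀ + 1, pₙ = aₙpₙ₋₁ + pₙ₋₂. -/
def cfP (a : ℕ → LS) : ℕ → LS
  | 0 => a 0
  | 1 => a 1 * a 0 + 1
  | n + 2 => a (n + 2) * cfP a (n + 1) + cfP a n

/-- Continued fraction denominators: q₀ = 1, q₁ = a₁, qₙ = aₙqₙ₋₁ + qₙ₋₂. -/
def cfQ (a : ℕ → LS) : ℕ → LS
  | 0 => 1
  | 1 => a 1
  | n + 2 => a (n + 2) * cfQ a (n + 1) + cfQ a n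


/-- The partial quotients of the continued fraction algorithm applied to f. -/
def cfa (f : LS) (n : ℕ) : LS := polyPart (Fseq f n)

/-- Substitution z ↦ z^d on formal Laurent series: (powSub d f)(z) = f(z^d). -/
def powSub (d : ℕ) (f : LS) : LS :=
  if hd : 0 < d then
    HahnSeries.embDomain
      (OrderEmbedding.ofStrictMono (fun n : ℤ => (d : ℤ) * n)
        (fun a b h => mul_lt_mul_of_pos_left h (by exact_mod_cast hd))) f
  else f

/-- The Mahler functional equation B(z) f(z) = A(z) f(z^d) + C(z). -/
def MahlerEq (A B C : Polynomial ℤ) (d : ℕ) (f : LS) : Prop :=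
  Polynomial.aeval Zl B * f = Polynomial.aeval Zl A * powSub d f + Polynomial.aeval Zl C

/-- Φ(f): the set of degrees of denominators of the convergents of f. -/
def Phi (f : LS) : Set ℤ := {m : ℤ | ∃ n : ℕ, ldeg (cfQ (cfa f) n) = m}

/-- [u, v] is a gap in Φ(f): u, v are consecutive elements of Φ(f). -/
def IsGap (f : LS) (u v : ℤ) : Prop :=
  u ∈ Phi f ∧ v ∈ Phi f ∧ u < v ∧ ∀ w : ℤ, u < w → w < v → w ∉ Phi f

/-- (p, q) is the convergent of f whose denominator has degree u. -/
def IsConvAt (f : LS) (u : ℤ) (p q : LS) : Prop :=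
  ∃ n : ℕ, cfP (cfa f) n = p ∧ cfQ (cfa f) n = q ∧ ldeg q = u

/-- The fraction (A(z) p(z^d) + C(z) q(z^d)) / (B(z) q(z^d)). -/
def succFrac (A B C : Polynomial ℤ) (d : ℕ) (p q : LS) : LS :=
  (Polynomial.aeval Zl A * powSub d p + Polynomial.aeval Zl C * powSub d q) /
    (Polynomial.aeval Zl B * powSub d q)

/-- [u, v] is a big gap: a gap of size exceeding (deg A + deg B)/(d-1). -/
def BigGap (A B : Polynomial ℤ) (d : ℕ) (f : LS) (u v : ℤ) : Prop :=
  IsGap f u v ∧ ((A.natDegree + B.natDegree : ℝ)) / ((d : ℝ) - 1) < (v : ℝ) - (u : ℝ)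

/-- [u', v'] is the direct successor of the gap [u, v]: the gap whose convergent
is (A p_u(z^d) + C q_u(z^d))/(B q_u(z^d)) (after cancellation). -/
def DirectSucc (A B C : Polynomial ℤ) (d : ℕ) (f : LS) (u v u' v' : ℤ) : Prop :=
  IsGap f u v ∧ IsGap f u' v' ∧
    ∃ p q p' q' : LS, IsConvAt f u p q ∧ IsConvAt f u' p' q' ∧
      p' / q' = succFrac A B C d p q

/-- A primitive gap: a big gap that is not the direct successor of any big gap. -/
def PrimitiveGap (A B C : Polynomial ℤ) (d : ℕ) (f : LS) (u v : ℤ) : Prop :=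
  BigGap A B d f u v ∧
    ¬ ∃ u' v' : ℤ, BigGap A B d f u' v' ∧ DirectSucc A B C d f u' v' u v

/-! Let `p/q = p_n/q_n` be the convergent ending the gap `[u, v]`, so `deg (f q - p) = -v`.
Substituting `z ↦ z^d` and using the functional equation gives, for
`Q = B q(z^d)` and `P = A p(z^d) + C q(z^d)`, the identity `f Q - P = A · (f q - p)(z^d)`, so
`deg Q = r_b + d u` and `deg (f Q - P) = r_a - d v`. The big-gap hypothesis makes
`deg (f Q - P) + deg Q < -(v - u) < 0`, and Legendre's theorem for Laurent series then says that
`P/Q` is a convergent `p_m/q_m`; the gap following it has size at least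
`-(deg (f Q - P) + deg Q) > v - u`. -/

lemma ldeg_zero : ldeg 0 = 0 := by simp [ldeg]

lemma ldeg_one : ldeg 1 = 0 := by simp [ldeg]

lemma ldeg_neg (x : LS) : ldeg (-x) = ldeg x := by simp [ldeg, HahnSeries.order_neg]

lemma ldeg_mul {x y : LS} (hx : x ≠ 0) (hy : y ≠ 0) : ldeg (x * y) = ldeg x + ldeg y := by
  simp [ldeg, HahnSeries.order_mul hx hy]; ring

lemma ldeg_inv {x : LS} (hx : x ≠ 0) : ldeg x⁻¹ = -ldeg x := by
  have h := ldeg_mul hx (inv_ne_zero hx)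
  rw [mul_inv_cancel₀ hx, ldeg_one] at h
  omega

lemma ldeg_add_le {x y : LS} (hxy : x + y ≠ 0) : ldeg (x + y) ≤ max (ldeg x) (ldeg y) := by
  have := HahnSeries.min_order_le_order_add hxy
  simp only [ldeg]
  omega

lemma ldeg_add_eq_left {x y : LS} (hx : x ≠ 0) (h : ldeg y < ldeg x) :
    x + y ≠ 0 ∧ ldeg (x + y) = ldeg x := by
  by_cases hy : y = 0
  · simp [hy, hx]
  have hlt : x.orderTop < y.orderTop := by
    rw [← HahnSeries.order_eq_orderTop_of_ne_zero hx,
      ← HahnSeries.order_eq_orderTop_of_ne_zero hy]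
    exact WithTop.coe_lt_coe.2 (by simp only [ldeg] at h; omega)
  have htop := HahnSeries.orderTop_add_eq_left hlt
  have hxy : x + y ≠ 0 := by
    rw [← HahnSeries.orderTop_ne_top, htop]; exact HahnSeries.orderTop_ne_top.2 hx
  refine ⟨hxy, ?_⟩
  have hord : ((x + y).order : WithTop ℤ) = x.order := by
    rw [HahnSeries.order_eq_orderTop_of_ne_zero hxy, HahnSeries.order_eq_orderTop_of_ne_zero hx,
      htop]
  simp only [ldeg, neg_inj]
  exact_mod_cast hord

lemma aeval_Zl_monomial (k : ℕ) (c : ℚ) :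
    aeval Zl (monomial k c) = HahnSeries.single (-(k : ℤ)) c := by
  have hC : algebraMap ℚ LS c = HahnSeries.C c := by
    rw [eq_ratCast (algebraMap ℚ LS), ← map_ratCast HahnSeries.C, Rat.cast_id]
  rw [aeval_monomial, hC, HahnSeries.C_apply, Zl, HahnSeries.single_pow,
    HahnSeries.single_mul_single]
  simp

lemma coeff_aeval_Zl (P : ℚ[X]) (n : ℤ) :
    (aeval Zl P).coeff n = if n ≤ 0 then P.coeff (-n).toNat else 0 := by
  induction P using Polynomial.induction_on' with
  | add P Q hP hQ =>
    rw [map_add, HahnSeries.coeff_add, hP, hQ, coeff_add]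
    split <;> simp
  | monomial k c =>
    rw [aeval_Zl_monomial, HahnSeries.coeff_single, coeff_monomial]
    split_ifs <;> first | rfl | omega

lemma aeval_Zl_ne_zero {P : ℚ[X]} (hP : P ≠ 0) : aeval Zl P ≠ 0 := by
  intro h
  have := coeff_aeval_Zl P (-P.natDegree)
  simp only [h, HahnSeries.coeff_zero, neg_nonpos, Nat.cast_nonneg, if_true, neg_neg,
    Int.toNat_natCast, coeff_natDegree] at this
  exact hP (leadingCoeff_eq_zero.1 this.symm)

lemma ldeg_aeval_Zl {P : ℚ[X]} (hP : P ≠ 0) : ldeg (aeval Zl P) = P.natDegree := by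
  have hlead : (aeval Zl P).coeff (-P.natDegree) ≠ 0 := by simp [coeff_aeval_Zl, hP]
  have hle := HahnSeries.order_le_of_coeff_ne_zero hlead
  have hge : -(P.natDegree : ℤ) ≤ (aeval Zl P).order := by
    by_contra! hlt
    have := HahnSeries.coeff_order_eq_zero.not.2 (aeval_Zl_ne_zero hP)
    rw [coeff_aeval_Zl, if_pos (by omega)] at this
    exact this (coeff_eq_zero_of_natDegree_lt (by omega))
  simp only [ldeg]
  omega

lemma aeval_Zl_map_intCast (A : ℤ[X]) : aeval Zl (A.map (Int.castRingHom ℚ)) = aeval Zl A := by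
  rw [aeval_def, aeval_def, eval₂_map]
  congr 1
  exact RingHom.ext_int _ _

lemma aeval_Zl_int_ne_zero {A : ℤ[X]} (hA : A ≠ 0) : aeval Zl A ≠ 0 := by
  rw [← aeval_Zl_map_intCast]
  exact aeval_Zl_ne_zero ((Polynomial.map_ne_zero_iff (Int.castRingHom ℚ).injective_int).2 hA)

lemma ldeg_aeval_Zl_int {A : ℤ[X]} (hA : A ≠ 0) : ldeg (aeval Zl A) = A.natDegree := by
  rw [← aeval_Zl_map_intCast,
    ldeg_aeval_Zl ((Polynomial.map_ne_zero_iff (Int.castRingHom ℚ).injective_int).2 hA),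
    natDegree_map_eq_of_injective (Int.castRingHom ℚ).injective_int]

abbrev zPolys : Subalgebra ℚ LS := Algebra.adjoin ℚ {Zl}

lemma mem_zPolys {g : LS} : g ∈ zPolys ↔ ∃ P : ℚ[X], aeval Zl P = g := by
  rw [zPolys, Algebra.adjoin_singleton_eq_range_aeval, AlgHom.mem_range]

lemma aeval_Zl_int_mem_zPolys (A : ℤ[X]) : aeval Zl A ∈ zPolys := by
  rw [← aeval_Zl_map_intCast]
  exact aeval_mem_adjoin_singleton ℚ Zl

lemma ldeg_nonneg_of_mem_zPolys {g : LS} (hg : g ∈ zPolys) (h0 : g ≠ 0) : 0 ≤ ldeg g := by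
  obtain ⟨P, rfl⟩ := mem_zPolys.1 hg
  rw [ldeg_aeval_Zl (by rintro rfl; simp at h0)]
  positivity

lemma coeff_polyPart (g : LS) (n : ℤ) :
    (polyPart g).coeff n = if n ≤ 0 then g.coeff n else 0 := rfl

lemma polyPart_mem_zPolys (g : LS) : polyPart g ∈ zPolys := by
  refine mem_zPolys.2
    ⟨∑ k ∈ Finset.range ((-g.order).toNat + 1), monomial k (g.coeff (-k)), ?_⟩
  ext n
  simp only [coeff_aeval_Zl, coeff_polyPart, finsetSum_coeff, coeff_monomial, Finset.sum_ite_eq',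
    Finset.mem_range]
  split_ifs with hn hN
  · congr 1; omega
  · exact (HahnSeries.coeff_eq_zero_of_lt_order (by omega)).symm
  · rfl

lemma isRatFn_iff_mem_adjoin {g : LS} : IsRatFn g ↔ g ∈ IntermediateField.adjoin ℚ {Zl} := by
  rw [IntermediateField.mem_adjoin_simple_iff]
  constructor
  · rintro ⟨P, Q, hQ, h⟩
    exact ⟨P, Q, by rw [← h, mul_div_cancel_right₀ _ (aeval_Zl_ne_zero hQ)]⟩
  · rintro ⟨P, Q, rfl⟩
    by_cases hQ : Q = 0
    · exact ⟨0, 1, one_ne_zero, by simp [hQ]⟩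
    · exact ⟨P, Q, hQ, div_mul_cancel₀ _ (aeval_Zl_ne_zero hQ)⟩

lemma zPolys_le_adjoin : zPolys ≤ (IntermediateField.adjoin ℚ {Zl}).toSubalgebra :=
  IntermediateField.algebra_adjoin_le_adjoin ℚ _

lemma one_le_neg_ldeg_sub_polyPart {g : LS} (h : g - polyPart g ≠ 0) :
    1 ≤ -ldeg (g - polyPart g) := by
  have hco := HahnSeries.coeff_order_eq_zero.not.2 h
  simp only [ldeg, neg_neg]
  by_contra! hlt
  rw [HahnSeries.coeff_sub, coeff_polyPart, if_pos (by omega), sub_self] at hco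
  exact hco rfl

lemma ldeg_polyPart {g : LS} (hg : g ≠ 0) (h : 0 ≤ ldeg g) :
    polyPart g ≠ 0 ∧ ldeg (polyPart g) = ldeg g := by
  have hle : g.order ≤ 0 := by simp only [ldeg] at h; omega
  have hco : (polyPart g).coeff g.order ≠ 0 := by
    rw [coeff_polyPart, if_pos hle]; exact HahnSeries.coeff_order_eq_zero.not.2 hg
  have hne := HahnSeries.ne_zero_of_coeff_ne_zero hco
  refine ⟨hne, ?_⟩
  have hge : g.order ≤ (polyPart g).order := by
    by_contra! hlt
    have := HahnSeries.coeff_order_eq_zero.not.2 hne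
    rw [coeff_polyPart, HahnSeries.coeff_eq_zero_of_lt_order hlt, ite_self] at this
    exact this rfl
  simp only [ldeg, neg_inj]
  exact le_antisymm (HahnSeries.order_le_of_coeff_ne_zero hco) hge

section PowSub

variable {d : ℕ}

def powSubHom (hd : 0 < d) : LS →+* LS where
  toFun := powSub d
  map_one' := by simpa only [powSub, dif_pos hd] using HahnSeries.embDomain_one _ (mul_zero _)
  map_mul' := by
    simpa only [powSub, dif_pos hd] using HahnSeries.embDomain_mul _ (fun a b => mul_add _ a b)
  map_zero' := by simpa only [powSub, dif_pos hd] using HahnSeries.embDomain_zero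
  map_add' := by simpa only [powSub, dif_pos hd] using HahnSeries.embDomain_add _

lemma powSubHom_apply (hd : 0 < d) (x : LS) : powSubHom hd x = powSub d x := rfl

lemma powSubHom_Zl (hd : 0 < d) : powSubHom hd Zl = Zl ^ d := by
  rw [powSubHom_apply, powSub, dif_pos hd, Zl, HahnSeries.embDomain_single, HahnSeries.single_pow,
    one_pow]
  congr 1

lemma powSub_ne_zero (hd : 0 < d) {x : LS} (hx : x ≠ 0) : powSub d x ≠ 0 :=
  (map_ne_zero_iff _ (powSubHom hd).injective).2 hx

lemma ldeg_powSub (hd : 0 < d) {x : LS} (hx : x ≠ 0) : ldeg (powSub d x) = d * ldeg x := by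
  have hord : ((powSub d x).order : WithTop ℤ) = ((d * x.order : ℤ) : WithTop ℤ) := by
    rw [HahnSeries.order_eq_orderTop_of_ne_zero (powSub_ne_zero hd hx), powSub, dif_pos hd,
      HahnSeries.orderTop_embDomain, ← HahnSeries.order_eq_orderTop_of_ne_zero hx,
      WithTop.map_coe]
    rfl
  simp only [ldeg]
  rw [WithTop.coe_eq_coe.1 hord]
  ring

lemma powSub_mem_zPolys (hd : 0 < d) {g : LS} (hg : g ∈ zPolys) : powSub d g ∈ zPolys := by
  obtain ⟨P, rfl⟩ := mem_zPolys.1 hg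
  refine mem_zPolys.2 ⟨P.comp (X ^ d), ?_⟩
  rw [aeval_comp, map_pow, aeval_X, ← powSubHom_Zl hd, ← powSubHom_apply hd]
  exact aeval_algHom_apply (powSubHom hd).toRatAlgHom Zl P

end PowSub

lemma cfQ_mem {S : Subsemiring LS} {a : ℕ → LS} (ha : ∀ n, a n ∈ S) : ∀ n, cfQ a n ∈ S
  | 0 => S.one_mem
  | 1 => ha 1
  | n + 2 => S.add_mem (S.mul_mem (ha (n + 2)) (cfQ_mem ha (n + 1))) (cfQ_mem ha n)

lemma cfP_mem {S : Subsemiring LS} {a : ℕ → LS} (ha : ∀ n, a n ∈ S) : ∀ n, cfP a n ∈ S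
  | 0 => ha 0
  | 1 => S.add_mem (S.mul_mem (ha 1) (ha 0)) S.one_mem
  | n + 2 => S.add_mem (S.mul_mem (ha (n + 2)) (cfP_mem ha (n + 1))) (cfP_mem ha n)

lemma cfP_cfa_mem_zPolys (f : LS) (n : ℕ) : cfP (cfa f) n ∈ zPolys :=
  cfP_mem (S := zPolys.toSubsemiring) (fun _ => polyPart_mem_zPolys _) n

lemma cfQ_cfa_mem_zPolys (f : LS) (n : ℕ) : cfQ (cfa f) n ∈ zPolys :=
  cfQ_mem (S := zPolys.toSubsemiring) (fun _ => polyPart_mem_zPolys _) n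

lemma cfP_succ_mul_cfQ_sub (a : ℕ → LS) :
    ∀ n, cfP a (n + 1) * cfQ a n - cfP a n * cfQ a (n + 1) = (-1) ^ n
  | 0 => by simp only [cfP, cfQ]; ring
  | n + 1 => by
    have hP : cfP a (n + 2) = a (n + 2) * cfP a (n + 1) + cfP a n := rfl
    have hQ : cfQ a (n + 2) = a (n + 2) * cfQ a (n + 1) + cfQ a n := rfl
    rw [hP, hQ, pow_succ]
    linear_combination -cfP_succ_mul_cfQ_sub a n

/-- Cramer's rule for the unimodular matrix of `cfP_succ_mul_cfQ_sub`. -/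
lemma cfP_eq_mul_of_cross_eq (a : ℕ → LS) {P Q : LS} {m : ℕ}
    (h : Q * cfP a m = P * cfQ a m) :
    P = ((-1) ^ m * (Q * cfP a (m + 1) - P * cfQ a (m + 1))) * cfP a m ∧
      Q = ((-1) ^ m * (Q * cfP a (m + 1) - P * cfQ a (m + 1))) * cfQ a m := by
  have hdet := cfP_succ_mul_cfQ_sub a m
  have hsq : ((-1 : LS) ^ m) ^ 2 = 1 := by rw [← pow_mul, mul_comm, pow_mul]; simp
  constructor
  · linear_combination (-(-1) ^ m * cfP a (m + 1)) * h - P * hsq - ((-1) ^ m * P) * hdet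
  · linear_combination (-(-1) ^ m * cfQ a (m + 1)) * h - Q * hsq - ((-1) ^ m * Q) * hdet

section ContinuedFraction

variable {f : LS}

lemma not_isRatFn_Fseq (hf : ¬ IsRatFn f) (n : ℕ) : ¬ IsRatFn (Fseq f n) := by
  induction n with
  | zero => exact hf
  | succ n ih =>
    rw [isRatFn_iff_mem_adjoin] at ih ⊢
    intro h
    have hrec : Fseq f n = polyPart (Fseq f n) + (Fseq f (n + 1))⁻¹ := by
      rw [Fseq, inv_inv, add_sub_cancel]
    exact ih (hrec ▸ add_mem (zPolys_le_adjoin (polyPart_mem_zPolys _)) (inv_mem h))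

lemma Fseq_sub_cfa_ne_zero (hf : ¬ IsRatFn f) (n : ℕ) : Fseq f n - cfa f n ≠ 0 := by
  intro h
  apply not_isRatFn_Fseq hf n
  rw [isRatFn_iff_mem_adjoin, sub_eq_zero.1 h]
  exact zPolys_le_adjoin (polyPart_mem_zPolys _)

lemma Fseq_succ_mul_sub_cfa (hf : ¬ IsRatFn f) (n : ℕ) :
    Fseq f (n + 1) * (Fseq f n - cfa f n) = 1 :=
  inv_mul_cancel₀ (Fseq_sub_cfa_ne_zero hf n)

lemma Fseq_succ_ne_zero (hf : ¬ IsRatFn f) (n : ℕ) : Fseq f (n + 1) ≠ 0 :=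
  inv_ne_zero (Fseq_sub_cfa_ne_zero hf n)

lemma one_le_ldeg_Fseq_succ (hf : ¬ IsRatFn f) (n : ℕ) : 1 ≤ ldeg (Fseq f (n + 1)) := by
  have h : Fseq f n - polyPart (Fseq f n) ≠ 0 := Fseq_sub_cfa_ne_zero hf n
  rw [Fseq, ldeg_inv h]
  exact one_le_neg_ldeg_sub_polyPart h

lemma ldeg_cfa_succ (hf : ¬ IsRatFn f) (n : ℕ) :
    cfa f (n + 1) ≠ 0 ∧ ldeg (cfa f (n + 1)) = ldeg (Fseq f (n + 1)) :=
  ldeg_polyPart (Fseq_succ_ne_zero hf n) (by linarith [one_le_ldeg_Fseq_succ hf n])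

lemma ldeg_cfQ_succ (hf : ¬ IsRatFn f) : ∀ n, cfQ (cfa f) (n + 1) ≠ 0 ∧
    ldeg (cfQ (cfa f) (n + 1)) = ldeg (cfa f (n + 1)) + ldeg (cfQ (cfa f) n)
  | 0 => ⟨(ldeg_cfa_succ hf 0).1, by simp [cfQ, ldeg_one]⟩
  | n + 1 => by
    obtain ⟨hq, hq_deg⟩ := ldeg_cfQ_succ hf n
    obtain ⟨ha, ha_deg⟩ := ldeg_cfa_succ hf (n + 1)
    have hlead := ldeg_mul ha hq
    have hQ : cfQ (cfa f) (n + 2) = cfa f (n + 2) * cfQ (cfa f) (n + 1) + cfQ (cfa f) n := rfl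
    rw [hQ, ← hlead]
    refine ldeg_add_eq_left (mul_ne_zero ha hq) ?_
    rw [hlead, hq_deg, ha_deg, (ldeg_cfa_succ hf n).2]
    linarith [one_le_ldeg_Fseq_succ hf n, one_le_ldeg_Fseq_succ hf (n + 1)]

lemma cfQ_ne_zero (hf : ¬ IsRatFn f) : ∀ n, cfQ (cfa f) n ≠ 0
  | 0 => one_ne_zero
  | n + 1 => (ldeg_cfQ_succ hf n).1

lemma strictMono_ldeg_cfQ (hf : ¬ IsRatFn f) : StrictMono fun n => ldeg (cfQ (cfa f) n) := by
  refine strictMono_nat_of_lt_succ fun n => ?_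
  rw [(ldeg_cfQ_succ hf n).2, (ldeg_cfa_succ hf n).2]
  linarith [one_le_ldeg_Fseq_succ hf n]

lemma Fseq_mul_cf_error (hf : ¬ IsRatFn f) : ∀ n, Fseq f (n + 2) *
    (f * cfQ (cfa f) (n + 1) - cfP (cfa f) (n + 1)) = -(f * cfQ (cfa f) n - cfP (cfa f) n)
  | 0 => by
    have h0 : Fseq f 1 * (f - cfa f 0) = 1 := Fseq_succ_mul_sub_cfa hf 0
    have h1 := Fseq_succ_mul_sub_cfa hf 1
    show Fseq f 2 * (f * cfa f 1 - (cfa f 1 * cfa f 0 + 1)) = -(f * 1 - cfa f 0)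
    linear_combination Fseq f 2 * h0 - (f - cfa f 0) * h1
  | n + 1 => by
    have hP : cfP (cfa f) (n + 2) = cfa f (n + 2) * cfP (cfa f) (n + 1) + cfP (cfa f) n := rfl
    have hQ : cfQ (cfa f) (n + 2) = cfa f (n + 2) * cfQ (cfa f) (n + 1) + cfQ (cfa f) n := rfl
    rw [hP, hQ]
    linear_combination Fseq f (n + 3) * Fseq_mul_cf_error hf n -
      (f * cfQ (cfa f) (n + 1) - cfP (cfa f) (n + 1)) * Fseq_succ_mul_sub_cfa hf (n + 2)

lemma ldeg_cf_error (hf : ¬ IsRatFn f) : ∀ n, f * cfQ (cfa f) n - cfP (cfa f) n ≠ 0 ∧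
    ldeg (f * cfQ (cfa f) n - cfP (cfa f) n) = -ldeg (cfQ (cfa f) (n + 1))
  | 0 => by
    have h0 : Fseq f 1 * (f * cfQ (cfa f) 0 - cfP (cfa f) 0) = 1 := by
      rw [cfQ, cfP, mul_one]; exact Fseq_succ_mul_sub_cfa hf 0
    have hne := right_ne_zero_of_mul_eq_one h0
    have hdeg := ldeg_mul (Fseq_succ_ne_zero hf 0) hne
    rw [h0, ldeg_one] at hdeg
    refine ⟨hne, ?_⟩
    rw [(ldeg_cfQ_succ hf 0).2, (ldeg_cfa_succ hf 0).2,
      show ldeg (cfQ (cfa f) 0) = 0 from ldeg_one]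
    omega
  | n + 1 => by
    obtain ⟨hne, hdeg⟩ := ldeg_cf_error hf n
    have h := Fseq_mul_cf_error hf n
    have hne' : f * cfQ (cfa f) (n + 1) - cfP (cfa f) (n + 1) ≠ 0 := by
      rintro h0; rw [h0, mul_zero, zero_eq_neg] at h; exact hne h
    have hdeg' := ldeg_mul (Fseq_succ_ne_zero hf (n + 1)) hne'
    rw [h, ldeg_neg, hdeg] at hdeg'
    refine ⟨hne', ?_⟩
    rw [(ldeg_cfQ_succ hf (n + 1)).2, (ldeg_cfa_succ hf (n + 1)).2]
    omega

lemma le_ldeg_cfQ (hf : ¬ IsRatFn f) (n : ℕ) : (n : ℤ) ≤ ldeg (cfQ (cfa f) n) := by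
  induction n with
  | zero => exact ldeg_one.ge
  | succ n ih => push_cast; linarith [strictMono_ldeg_cfQ hf (Nat.lt_succ_self n)]

lemma exists_ldeg_cfQ_le_lt (hf : ¬ IsRatFn f) {D : ℤ} (hD : 0 ≤ D) :
    ∃ m, ldeg (cfQ (cfa f) m) ≤ D ∧ D < ldeg (cfQ (cfa f) (m + 1)) := by
  have htendsto : Filter.Tendsto (fun n => ldeg (cfQ (cfa f) n)) Filter.atTop Filter.atTop :=
    Filter.tendsto_atTop_mono (le_ldeg_cfQ hf) tendsto_natCast_atTop_atTop
  obtain ⟨m, hm, hm1⟩ := (strictMono_ldeg_cfQ hf).exists_between_of_tendsto_atTop htendsto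
    (x := D + 1) (by simp only [show ldeg (cfQ (cfa f) 0) = 0 from ldeg_one]; omega)
  exact ⟨m, by omega, by omega⟩

lemma isGap_ldeg_cfQ (hf : ¬ IsRatFn f) (m : ℕ) :
    IsGap f (ldeg (cfQ (cfa f) m)) (ldeg (cfQ (cfa f) (m + 1))) := by
  refine ⟨⟨m, rfl⟩, ⟨m + 1, rfl⟩, strictMono_ldeg_cfQ hf (Nat.lt_succ_self m), ?_⟩
  rintro w hw hw' ⟨k, rfl⟩
  rcases le_or_gt k m with hk | hk
  · exact absurd ((strictMono_ldeg_cfQ hf).monotone hk) (not_le.2 hw)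
  · exact absurd ((strictMono_ldeg_cfQ hf).monotone hk) (not_le.2 hw')

lemma IsGap.eq_ldeg_cfQ_succ (hf : ¬ IsRatFn f) {u v : ℤ} (hgap : IsGap f u v) {n : ℕ}
    (hn : ldeg (cfQ (cfa f) n) = u) : v = ldeg (cfQ (cfa f) (n + 1)) := by
  obtain ⟨-, ⟨k, rfl⟩, huv, hgap⟩ := hgap
  have hnk : n + 1 ≤ k := (strictMono_ldeg_cfQ hf).lt_iff_lt.1 (hn ▸ huv)
  refine ((strictMono_ldeg_cfQ hf).monotone hnk).lt_or_eq.elim (fun hlt => ?_) Eq.symm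
  exact absurd ⟨n + 1, rfl⟩ (hgap _ (hn ▸ strictMono_ldeg_cfQ hf (Nat.lt_succ_self n)) hlt)

lemma cross_eq_of_ldeg_lt (hf : ¬ IsRatFn f) {P Q : LS} (hP : P ∈ zPolys) (hQ : Q ∈ zPolys)
    (hQ0 : Q ≠ 0) {m : ℕ} (hm : ldeg (cfQ (cfa f) m) ≤ ldeg Q)
    (hm1 : ldeg Q < ldeg (cfQ (cfa f) (m + 1))) (h : ldeg (f * Q - P) < -ldeg Q) :
    Q * cfP (cfa f) m = P * cfQ (cfa f) m := by
  have hQ_deg := ldeg_nonneg_of_mem_zPolys hQ hQ0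
  have hE : f * Q - P ≠ 0 := by
    rintro h0; rw [h0, ldeg_zero] at h; omega
  obtain ⟨he, he_deg⟩ := ldeg_cf_error hf m
  have hq := cfQ_ne_zero hf m
  -- `Q p_m - P q_m` would be a nonzero polynomial of negative degree.
  by_contra hne
  have hβ0 := sub_ne_zero.2 hne
  have hβ_deg := ldeg_nonneg_of_mem_zPolys
    (sub_mem (mul_mem hQ (cfP_cfa_mem_zPolys f m)) (mul_mem hP (cfQ_cfa_mem_zPolys f m))) hβ0
  have hβ : Q * cfP (cfa f) m - P * cfQ (cfa f) m =
      cfQ (cfa f) m * (f * Q - P) + -(Q * (f * cfQ (cfa f) m - cfP (cfa f) m)) := by ring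
  have hle := ldeg_add_le (hβ ▸ hβ0)
  rw [← hβ, ldeg_neg, ldeg_mul hq hE, ldeg_mul hQ0 he, he_deg] at hle
  omega

lemma exists_eq_mul_cf_of_ldeg_lt (hf : ¬ IsRatFn f) {P Q : LS} (hP : P ∈ zPolys)
    (hQ : Q ∈ zPolys) (hQ0 : Q ≠ 0) (h : ldeg (f * Q - P) < -ldeg Q) :
    ∃ m, ∃ α ∈ zPolys, α ≠ 0 ∧ P = α * cfP (cfa f) m ∧ Q = α * cfQ (cfa f) m := by
  obtain ⟨m, hm, hm1⟩ := exists_ldeg_cfQ_le_lt hf (ldeg_nonneg_of_mem_zPolys hQ hQ0)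
  obtain ⟨hPm, hQm⟩ :=
    cfP_eq_mul_of_cross_eq (cfa f) (cross_eq_of_ldeg_lt hf hP hQ hQ0 hm hm1 h)
  refine ⟨m, _, ?_, fun h0 => hQ0 (by rw [hQm, h0, zero_mul]), hPm, hQm⟩
  exact mul_mem (pow_mem (neg_mem (one_mem _)) m)
    (sub_mem (mul_mem hQ (cfP_cfa_mem_zPolys f _)) (mul_mem hP (cfQ_cfa_mem_zPolys f _)))

theorem exists_cf_convergent_of_ldeg_lt (hf : ¬ IsRatFn f) {P Q : LS} (hP : P ∈ zPolys)
    (hQ : Q ∈ zPolys) (hQ0 : Q ≠ 0) (h : ldeg (f * Q - P) < -ldeg Q) :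
    ∃ m, cfP (cfa f) m / cfQ (cfa f) m = P / Q ∧
      -(ldeg (f * Q - P) + ldeg Q) ≤ ldeg (cfQ (cfa f) (m + 1)) - ldeg (cfQ (cfa f) m) := by
  obtain ⟨m, α, hα, hα0, rfl, rfl⟩ := exists_eq_mul_cf_of_ldeg_lt hf hP hQ hQ0 h
  refine ⟨m, (mul_div_mul_left _ _ hα0).symm, ?_⟩
  obtain ⟨he, he_deg⟩ := ldeg_cf_error hf m
  rw [show f * (α * cfQ (cfa f) m) - α * cfP (cfa f) m =
      α * (f * cfQ (cfa f) m - cfP (cfa f) m) by ring,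
    ldeg_mul hα0 he, ldeg_mul hα0 (cfQ_ne_zero hf m), he_deg]
  linarith [ldeg_nonneg_of_mem_zPolys hα hα0]

end ContinuedFraction

section MahlerSuccessor

variable {A B C : ℤ[X]} {d : ℕ} {f : LS}

def succNum (A C : ℤ[X]) (d : ℕ) (p q : LS) : LS :=
  aeval Zl A * powSub d p + aeval Zl C * powSub d q

def succDen (B : ℤ[X]) (d : ℕ) (q : LS) : LS := aeval Zl B * powSub d q

lemma succNum_mem_zPolys (hd : 0 < d) {p q : LS} (hp : p ∈ zPolys) (hq : q ∈ zPolys) :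
    succNum A C d p q ∈ zPolys :=
  add_mem (mul_mem (aeval_Zl_int_mem_zPolys A) (powSub_mem_zPolys hd hp))
    (mul_mem (aeval_Zl_int_mem_zPolys C) (powSub_mem_zPolys hd hq))

lemma succDen_mem_zPolys (hd : 0 < d) {q : LS} (hq : q ∈ zPolys) : succDen B d q ∈ zPolys :=
  mul_mem (aeval_Zl_int_mem_zPolys B) (powSub_mem_zPolys hd hq)

lemma succDen_ne_zero (hB : B ≠ 0) (hd : 0 < d) {q : LS} (hq : q ≠ 0) : succDen B d q ≠ 0 :=
  mul_ne_zero (aeval_Zl_int_ne_zero hB) (powSub_ne_zero hd hq)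

lemma ldeg_succDen (hB : B ≠ 0) (hd : 0 < d) {q : LS} (hq : q ≠ 0) :
    ldeg (succDen B d q) = B.natDegree + d * ldeg q := by
  rw [succDen, ldeg_mul (aeval_Zl_int_ne_zero hB) (powSub_ne_zero hd hq), ldeg_aeval_Zl_int hB,
    ldeg_powSub hd hq]

lemma MahlerEq.mul_succDen_sub_succNum (hM : MahlerEq A B C d f) (hd : 0 < d) (p q : LS) :
    f * succDen B d q - succNum A C d p q = aeval Zl A * powSub d (f * q - p) := by
  rw [MahlerEq, ← powSubHom_apply hd] at hM
  simp only [succDen, succNum, ← powSubHom_apply hd, map_sub, map_mul]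
  linear_combination powSubHom hd q * hM

lemma MahlerEq.ldeg_mul_succDen_sub_succNum (hM : MahlerEq A B C d f) (hA : A ≠ 0)
    (hd : 0 < d) {p q : LS} (he : f * q - p ≠ 0) :
    ldeg (f * succDen B d q - succNum A C d p q) = A.natDegree + d * ldeg (f * q - p) := by
  rw [hM.mul_succDen_sub_succNum hd, ldeg_mul (aeval_Zl_int_ne_zero hA) (powSub_ne_zero hd he),
    ldeg_aeval_Zl_int hA, ldeg_powSub hd he]

end MahlerSuccessor

/-- for f non-rational satisfying the Mahler equation, any big gap
[u, v] in Φ(f) (i.e. v - u > (deg A + deg B)/(d-1)) produces, from its convergent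
p_u/q_u, the new convergent (A p_u(z^d) + C q_u(z^d))/(B q_u(z^d)) (after
cancellation), whose associated gap [u', v'] has size strictly larger than v - u. -/
theorem big_gap_successor (A B C : Polynomial ℤ) (hA : A ≠ 0) (hB : B ≠ 0)
    (d : ℕ) (hd : 2 ≤ d) (f : LS) (hf : ¬ IsRatFn f) (hM : MahlerEq A B C d f)
    (u v : ℤ) (hgap : IsGap f u v)
    (hbig : ((A.natDegree + B.natDegree : ℝ)) / ((d : ℝ) - 1) < (v : ℝ) - (u : ℝ)) :
    ∀ p q : LS, IsConvAt f u p q →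
      ∃ u' v' : ℤ, ∃ p' q' : LS, IsGap f u' v' ∧ IsConvAt f u' p' q' ∧
        p' / q' = succFrac A B C d p q ∧ v - u < v' - u' := by
  rintro p q ⟨n, rfl, rfl, rfl⟩
  have hd0 : 0 < d := by omega
  have hv := hgap.eq_ldeg_cfQ_succ hf rfl
  have huv := hgap.2.2.1
  obtain ⟨he, he_deg⟩ := ldeg_cf_error hf n
  have hQ_deg := ldeg_succDen hB hd0 (cfQ_ne_zero hf n)
  have hE_deg := hM.ldeg_mul_succDen_sub_succNum hA hd0 he
  have hbig' : (A.natDegree + B.natDegree : ℤ) < (d - 1) * (v - ldeg (cfQ (cfa f) n)) := by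
    rw [div_lt_iff₀ (by norm_num; omega), mul_comm] at hbig
    exact_mod_cast hbig
  obtain ⟨m, hconv, hm⟩ := exists_cf_convergent_of_ldeg_lt hf
    (succNum_mem_zPolys hd0 (cfP_cfa_mem_zPolys f n) (cfQ_cfa_mem_zPolys f n))
    (succDen_mem_zPolys hd0 (cfQ_cfa_mem_zPolys f n)) (succDen_ne_zero hB hd0 (cfQ_ne_zero hf n))
    (by rw [hE_deg, hQ_deg, he_deg, ← hv]; linarith)
  refine ⟨_, _, _, _, isGap_ldeg_cfQ hf m, ⟨m, rfl, rfl, rfl⟩, hconv, ?_⟩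
  rw [hE_deg, hQ_deg, he_deg, ← hv] at hm
  linarith
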